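/- If log(p/q)/log((1−q)/(1−p)) is irrational, then for every x ∈ (0,1) the set P(x) = { x_{ℓ,d} : ℓ, d nonnegative integers } is dense in [0,1], i.e. the closure of P(x) contains the interval [0,1]. -/

import Mathlib

/-!
In log-odds coordinates each like adds `a = log (p / q) > 0` and each dislike subtracts
`b = log ((1 - q) / (1 - p)) > 0`, so `x_{ℓ,d}` is the sigmoid of `logit x + ℓ a - d b`.
When `a / b` is irrational the natural multiples of `a` are dense modulo `b` (an irrational
rotation of the circle), hence `{ℓ a - d b}` is dense in `ℝ`, and its image under the
sigmoid is dense in the sigmoid's range `(0, 1)`.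
-/

/-- The updated prior after `ℓ` likes and `d` dislikes. -/
noncomputable def updatedPrior (p q x : ℝ) (ℓ d : ℕ) : ℝ :=
  x * p ^ ℓ * (1 - p) ^ d /
    (x * p ^ ℓ * (1 - p) ^ d + (1 - x) * q ^ ℓ * (1 - q) ^ d)

open Real Set Metric

/-- The orbit point `ℓ a` is taken close to `t - N a` modulo `b`; since `N a` is large, the
multiple of `b` separating them is nonnegative. -/
theorem dense_natCast_mul_sub_natCast_mul {a b : ℝ} (ha : 0 < a) (hb : 0 < b)
    (hab : Irrational (a / b)) :
    Dense {t : ℝ | ∃ ℓ d : ℕ, t = ℓ * a - d * b} := by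
  have : Fact (0 < b) := ⟨hb⟩
  have horbit : DenseRange fun n : ℕ => n • (a : AddCircle b) :=
    denseRange_zsmul_iff_nsmul.1 (AddCircle.denseRange_zsmul_coe_iff.2 hab)
  refine dense_iff.2 fun t ε hε => ?_
  obtain ⟨N, hN⟩ := exists_nat_gt ((t + ε) / a)
  rw [div_lt_iff₀ ha] at hN
  obtain ⟨ℓ, y, hy, hyℓ⟩ := horbit.exists_mem_open
    (QuotientAddGroup.isOpenMap_coe _ (isOpen_ball (x := t - N * a) (ε := ε)))
    ((nonempty_ball.2 hε).image _)
  obtain ⟨k, hk⟩ : ∃ k : ℤ, k • b = ℓ * a - y := by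
    rw [← AddCircle.coe_eq_zero_iff, AddCircle.coe_sub, ← nsmul_eq_mul, AddCircle.coe_nsmul,
      hyℓ, sub_self]
  rw [mem_ball, Real.dist_eq, abs_lt] at hy
  obtain ⟨d, rfl⟩ : ∃ d : ℕ, k = d := by
    refine Int.eq_ofNat_of_zero_le ?_
    have : 0 < (k : ℝ) * b := by rw [← zsmul_eq_mul, hk]; nlinarith [ℓ.cast_nonneg (α := ℝ)]
    exact_mod_cast (pos_of_mul_pos_left this hb.le).le
  refine ⟨y + N * a, ?_, ℓ + N, d, ?_⟩
  · rw [mem_ball, Real.dist_eq, abs_lt]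
    constructor <;> linarith
  · rw [natCast_zsmul, nsmul_eq_mul] at hk
    push_cast
    linarith

theorem Real.sigmoid_log_sub_log {A B : ℝ} (hA : 0 < A) (hB : 0 < B) :
    sigmoid (log A - log B) = A / (A + B) := by
  rw [sigmoid_def, neg_sub, exp_sub, exp_log hA, exp_log hB]
  field_simp

theorem updatedPrior_eq_sigmoid {p q x : ℝ} (hp : p ∈ Ioo 0 1) (hq : q ∈ Ioo 0 1)
    (hx : x ∈ Ioo 0 1) (ℓ d : ℕ) :
    updatedPrior p q x ℓ d =
      sigmoid (log (x / (1 - x)) + (ℓ * log (p / q) - d * log ((1 - q) / (1 - p)))) := by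
  obtain ⟨hp0, hp1⟩ := hp
  obtain ⟨hq0, hq1⟩ := hq
  obtain ⟨hx0, hx1⟩ := hx
  have h1p : 1 - p ≠ 0 := by linarith
  have h1q : 1 - q ≠ 0 := by linarith
  have h1x : 1 - x ≠ 0 := by linarith
  rw [updatedPrior, ← sigmoid_log_sub_log (by positivity) (by positivity)]
  congr 1
  simp only [log_mul, log_div, log_pow, ne_eq, mul_eq_zero, pow_eq_zero_iff', hx0.ne',
    hp0.ne', hq0.ne', h1p, h1q, h1x, false_or, false_and, not_false_eq_true]
  ring

/-- If `log(p/q)/log((1−q)/(1−p))` is irrational then, for every `x ∈ (0,1)`, the set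
of possible updated priors `P(x) = { x_{ℓ,d} : ℓ, d ∈ ℕ }` is dense in `[0,1]`. -/
theorem updatedPriors_dense_of_irrational (p q : ℝ) (hq0 : 0 < q) (hqp : q < p)
    (hp1 : p < 1)
    (hirr : Irrational (Real.log (p / q) / Real.log ((1 - q) / (1 - p))))
    (x : ℝ) (hx : x ∈ Set.Ioo (0 : ℝ) 1) :
    Set.Icc (0 : ℝ) 1 ⊆ closure {z : ℝ | ∃ ℓ d : ℕ, z = updatedPrior p q x ℓ d} := by
  set a := log (p / q)
  set b := log ((1 - q) / (1 - p))
  have ha : 0 < a := log_pos ((one_lt_div hq0).2 hqp)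
  have hb : 0 < b := log_pos ((one_lt_div (by linarith)).2 (by linarith))
  set f : ℝ → ℝ := fun u => sigmoid (log (x / (1 - x)) + u)
  have hf : Continuous f := continuous_sigmoid.comp (continuous_const_add _)
  have hrange : range f = Ioo 0 1 := by
    rw [← range_sigmoid]
    exact (add_left_surjective _).range_comp sigmoid
  have himg : f '' {t | ∃ ℓ d : ℕ, t = ℓ * a - d * b} ⊆
      {z | ∃ ℓ d : ℕ, z = updatedPrior p q x ℓ d} := by
    rintro _ ⟨_, ⟨ℓ, d, rfl⟩, rfl⟩
    exact ⟨ℓ, d, (updatedPrior_eq_sigmoid ⟨hq0.trans hqp, hp1⟩ ⟨hq0, hqp.trans hp1⟩ hx ℓ d).symm⟩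
  calc Icc (0 : ℝ) 1 = closure (range f) := by rw [hrange, closure_Ioo zero_ne_one]
    _ ⊆ closure {z | ∃ ℓ d : ℕ, z = updatedPrior p q x ℓ d} :=
      closure_minimal ((hf.range_subset_closure_image_dense
        (dense_natCast_mul_sub_natCast_mul ha hb hirr)).trans (closure_mono himg))
        isClosed_closure
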